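/- Let f₁(x,y) = (x/2 + 1/2, y) and f₂(x,y) = (x, y/2) on ℝ², and let F be the associated Hutchinson operator, F(S) = closure(f₁(S) ∪ f₂(S)). Then the semiattractor of this IFS is the singleton {(1,0)}: ⋂_{x∈ℝ²} Li Fⁿ({x}) = {(1,0)}, where (1,0) is the common fixed point of f₁ and f₂. -/
import Mathlib


open Filter Topology Set

/-- Lower Kuratowski limit of a sequence of sets. -/
def Li {X : Type*} [MetricSpace X] (S : ℕ → Set X) : Set X :=
  {y | ∃ u : ℕ → X, (∀ n, u n ∈ S n) ∧ Tendsto u atTop (𝓝 y)}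

/-- Hutchinson operator of the IFS `(X; f_i : i ∈ I)`. -/
def hutch {X : Type*} [TopologicalSpace X] {I : Type*} (f : I → X → X) (S : Set X) : Set X :=
  closure (⋃ i, f i '' S)

/-- The map `f₁(x,y) = (x/2 + 1/2, y)`. -/
noncomputable def g1 : ℝ × ℝ → ℝ × ℝ := fun v => (v.1 / 2 + 1 / 2, v.2)

/-- The map `f₂(x,y) = (x, y/2)`. -/
noncomputable def g2 : ℝ × ℝ → ℝ × ℝ := fun v => (v.1, v.2 / 2)

/-- The alternating orbit starting at `x`: apply `g1`, then `g2`, then `g1`, ... -/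
noncomputable def useq (x : ℝ × ℝ) : ℕ → ℝ × ℝ
  | 0 => x
  | n+1 => if Even n then g1 (useq x n) else g2 (useq x n)

lemma useq_mem (x : ℝ × ℝ) : ∀ n, useq x n ∈ (hutch ![g1,g2])^[n] {x} := by
  intro n
  induction n with
  | zero => simp [useq]
  | succ n ih =>
    rw [Function.iterate_succ_apply']
    by_cases h : Even n
    · have : useq x (n+1) = g1 (useq x n) := by simp [useq, h]
      rw [this]
      exact subset_closure (mem_iUnion.2 ⟨0, mem_image_of_mem _ ih⟩)
    · have : useq x (n+1) = g2 (useq x n) := by simp [useq, h]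
      rw [this]
      exact subset_closure (mem_iUnion.2 ⟨1, mem_image_of_mem _ ih⟩)

lemma useq_step2 (x : ℝ × ℝ) (n : ℕ) :
    useq x (n+2) = ((useq x n).1/2 + 1/2, (useq x n).2/2) := by
  by_cases h : Even n
  · have h1 : ¬ Even (n+1) := by simp [Nat.even_add_one, h]
    simp [useq, h, h1, g1, g2]
  · have h1 : Even (n+1) := by simp [Nat.even_add_one, h]
    simp [useq, h, h1, g1, g2]

lemma dist_half (p : ℝ × ℝ) :
    dist ((p.1/2 + 1/2, p.2/2) : ℝ × ℝ) ((1:ℝ),(0:ℝ)) = dist p (1,0) / 2 := by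
  simp only [Prod.dist_eq, Real.dist_eq]
  have e1 : p.1/2 + 1/2 - 1 = (p.1 - 1)/2 := by ring
  have e2 : p.2/2 - 0 = (p.2 - 0)/2 := by ring
  rw [e1, e2, abs_div, abs_div]
  simp [max_div_div_right, abs_of_nonneg]

lemma useq_dist (x : ℝ × ℝ) : ∀ n, dist (useq x n) ((1:ℝ),(0:ℝ)) ≤ dist x (1,0) / 2^(n/2) := by
  intro n
  induction n using Nat.strong_induction_on with
  | _ n ih =>
    match n with
    | 0 => simp [useq]
    | 1 =>
      have : useq x 1 = g1 x := by simp [useq]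
      rw [this]
      simp only [Nat.reduceDiv, pow_zero, div_one, g1, Prod.dist_eq, Real.dist_eq]
      have e1 : x.1/2 + 1/2 - 1 = (x.1 - 1)/2 := by ring
      rw [e1, abs_div, abs_two]
      exact max_le_max (div_le_self (abs_nonneg _) one_le_two) le_rfl
    | n+2 =>
      have h2 := ih n (by omega)
      rw [useq_step2, dist_half]
      have hdiv : (n+2)/2 = n/2 + 1 := by omega
      rw [hdiv, pow_succ, ← div_div]
      gcongr

lemma useq_tendsto (x : ℝ × ℝ) : Tendsto (useq x) atTop (𝓝 (1,0)) := by
  rw [tendsto_iff_dist_tendsto_zero]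
  apply squeeze_zero (fun n => dist_nonneg) (useq_dist x)
  have h1 : Tendsto (fun k : ℕ => dist x ((1:ℝ),(0:ℝ)) / 2^k) atTop (𝓝 0) := by
    have := (tendsto_pow_atTop_nhds_zero_of_lt_one (r := (2:ℝ)⁻¹) (by norm_num)
      (by norm_num)).const_mul (dist x ((1:ℝ),(0:ℝ)))
    simpa [div_eq_mul_inv, inv_pow] using this
  exact h1.comp (tendsto_atTop_atTop.2 fun b => ⟨2*b, fun n hn => by omega⟩)

lemma hutch_fix : (hutch ![g1,g2]) {((1:ℝ),(0:ℝ))} = {(1,0)} := by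
  have : (⋃ i, ![g1,g2] i '' ({((1:ℝ),(0:ℝ))}:Set (ℝ×ℝ))) = {(1,0)} := by
    ext p
    simp [g1, g2, Fin.exists_fin_two, Prod.ext_iff]
    norm_num
    tauto
  show closure _ = _
  rw [this]
  exact closure_singleton

lemma hutch_iter_fix : ∀ n, (hutch ![g1,g2])^[n] {((1:ℝ),(0:ℝ))} = {(1,0)} := by
  intro n
  induction n with
  | zero => rfl
  | succ n ih => rw [Function.iterate_succ_apply', ih, hutch_fix]

/-- The semiattractor of the IFS `(ℝ²; f₁, f₂)` with `f₁(x,y) = (x/2 + 1/2, y)` and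
`f₂(x,y) = (x, y/2)` is the singleton `{(1,0)}`, the common fixed point of `f₁` and `f₂`. -/
theorem semiattractor_singleton :
    g1 (1, 0) = (1, 0) ∧ g2 (1, 0) = (1, 0) ∧
    (⋂ x : ℝ × ℝ, Li (fun n => (hutch ![g1, g2])^[n] {x})) = {(1, 0)} := by
  refine ⟨by norm_num [g1, Prod.ext_iff], by norm_num [g2, Prod.ext_iff], ?_⟩
  apply Subset.antisymm
  · intro p hp
    have h := mem_iInter.1 hp ((1:ℝ),(0:ℝ))
    obtain ⟨u, hu, hlim⟩ := h
    have hconst : ∀ n, u n = ((1:ℝ),(0:ℝ)) := by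
      intro n
      have h := hu n
      simp only [hutch_iter_fix, mem_singleton_iff] at h
      exact h
    have : Tendsto u atTop (𝓝 ((1:ℝ),(0:ℝ))) := by
      simp only [funext hconst]
      exact tendsto_const_nhds
    exact mem_singleton_iff.2 (tendsto_nhds_unique hlim this)
  · intro p hp
    rw [mem_singleton_iff] at hp
    subst hp
    exact mem_iInter.2 fun x => ⟨useq x, useq_mem x, useq_tendsto x⟩
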